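/- Fix k ≥ 1 and a family (η_α : α < λ) of elements of (k+1)^ω, with all η_α pairwise distinct. Let u_0, …, u_{k-1} be finite subsets of λ forming a Δ-system with root u, all of the same cardinality N, and suppose: (a) there is h ∈ ω such that for each i < k the restrictions η_β↾h for β ∈ u_i are pairwise distinct; (b) for each i, j < k and each n < N, the n-th elements β ∈ u_i and β' ∈ u_j (in increasing order) satisfy η_β↾(h+1) = η_{β'}↾(h+1); (c) there are colors c_0,…,c_{N-1} ∈ ω such that each r_i : u_i → ω assigns color c_n to the n-th element of u_i; and (d) each r_i is a condition, i.e., there is no r_i-homogeneous set {α_0,…,α_k} ⊆ u_i and ν ∈ (k+1)^{<ω} with ν⌢⟨j⟩ ⊑ η_{α_j} for all j ≤ k. Then the union r = ⋃_{i<k} r_i is also a condition: there is no r-homogeneous {α_0,…,α_k} ⊆ ⋃_{i<k} u_i and ν ∈ (k+1)^{<ω} with ν⌢⟨j⟩ ⊑ η_{α_j} for all j ≤ k. -/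

import Mathlib

open Cardinal

def InitSeg {β : Type*} (l : List β) (g : ℕ → β) : Prop :=
  ∀ m (h : m < l.length), l.get ⟨m, h⟩ = g m

/-- There is an `r`-homogeneous set `{α_0,…,α_k} ⊆ S` and `ν ∈ (k+1)^{<ω}`
with `ν⌢⟨j⟩ ⊑ η_{α_j}` for all `j ≤ k`. -/
def Bad (k : ℕ) (η : Ordinal → ℕ → Fin (k + 1))
    (r : Ordinal → ℕ) (S : Set Ordinal) : Prop :=
  ∃ (ν : List (Fin (k + 1))) (α : Fin (k + 1) → Ordinal),
    Function.Injective α ∧ (∀ j, α j ∈ S) ∧ (∀ j j', r (α j) = r (α j')) ∧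
    ∀ j, InitSeg (ν ++ [j]) (η (α j))

/-!
Let `ν⌢⟨j⟩ ⊑ η_{α_j}` (`j ≤ k`) witness badness of the union, with `α_j` the `n_j`-th element
of `u_{I j}`. If `h ≤ |ν|`, all `η_{α_j}` agree below `h`, so by (a) the `α_j` lie in pairwise
distinct `u_i`: impossible for `k + 1` ordinals and `k` sets. If `|ν| < h`, replace each `α_j` by
the `n_j`-th element of one fixed `u_i`; by (b) and (c) this keeps both the pattern `ν⌢⟨j⟩` and
the colours, so `u_i` is bad, contradicting (d).
-/

namespace InitSeg

variable {β : Type*} {l l' : List β} {g g' : ℕ → β}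

theorem append_left (hg : InitSeg (l ++ l') g) : InitSeg l g := fun m hm => by
  rw [← hg m (by simp; omega)]
  simp [List.getElem_append_left hm]

theorem apply_length {a : β} (hg : InitSeg (l ++ [a]) g) : g l.length = a := by
  rw [← hg l.length (by simp)]
  simp

theorem apply_eq_apply (hg : InitSeg l g) (hg' : InitSeg l g') {m : ℕ} (hm : m < l.length) :
    g m = g' m :=
  (hg m hm).symm.trans (hg' m hm)

theorem congr (hg : InitSeg l g) (hgg' : ∀ m < l.length, g m = g' m) : InitSeg l g' :=
  fun m hm => (hg m hm).trans (hgg' m hm)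

end InitSeg

theorem bad_of_agree {k : ℕ} {η : Ordinal → ℕ → Fin (k + 1)} {r : Ordinal → ℕ}
    {S : Set Ordinal} {ν : List (Fin (k + 1))} {α β : Fin (k + 1) → Ordinal}
    (hαr : ∀ j j', r (α j) = r (α j')) (hαν : ∀ j, InitSeg (ν ++ [j]) (η (α j)))
    (hβS : ∀ j, β j ∈ S) (hβr : ∀ j, r (β j) = r (α j))
    (hβη : ∀ j, ∀ m ≤ ν.length, η (β j) m = η (α j) m) :
    Bad k η r S := by
  have hβν (j) : InitSeg (ν ++ [j]) (η (β j)) :=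
    (hαν j).congr fun m hm => (hβη j m (by simp at hm; omega)).symm
  refine ⟨ν, β, fun j j' hjj' => ?_, hβS, fun j j' => by rw [hβr, hβr, hαr], hβν⟩
  rw [← (hβν j).apply_length, ← (hβν j').apply_length, hjj']

theorem injective_of_separated {ι κ X : Type*} {u : ι → Finset Ordinal}
    {η : Ordinal → ℕ → X} {h : ℕ}
    (ha : ∀ i, ∀ β ∈ u i, ∀ β' ∈ u i, β ≠ β' → ∃ m < h, η β m ≠ η β' m)
    {α : κ → Ordinal} (hα : Function.Injective α) {I : κ → ι} (hαu : ∀ j, α j ∈ u (I j))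
    (hαη : ∀ j j', ∀ m < h, η (α j) m = η (α j') m) :
    Function.Injective I := by
  intro j j' hjj'
  by_contra hne
  obtain ⟨m, hm, hηm⟩ := ha (I j) _ (hαu j) _ (hjj' ▸ hαu j') (hα.ne hne)
  exact hηm (hαη j j' m hm)

theorem Finset.exists_lt_card_getElem?_sort_eq {α : Type*} [LinearOrder α] {s : Finset α}
    {a : α} (ha : a ∈ s) : ∃ n < s.card, (s.sort (· ≤ ·))[n]? = some a := by
  obtain ⟨n, hn⟩ := List.mem_iff_getElem?.1 ((Finset.mem_sort (· ≤ ·)).2 ha)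
  refine ⟨n, ?_, hn⟩
  simpa only [Finset.length_sort] using (List.getElem?_eq_some_iff.1 hn).1

theorem Finset.exists_getElem?_sort_eq {α : Type*} [LinearOrder α] {s : Finset α} {n : ℕ}
    (hn : n < s.card) : ∃ a, (s.sort (· ≤ ·))[n]? = some a :=
  ⟨_, List.getElem?_eq_getElem (by rwa [Finset.length_sort])⟩

theorem Finset.mem_of_getElem?_sort_eq {α : Type*} [LinearOrder α] {s : Finset α} {n : ℕ}
    {a : α} (h : (s.sort (· ≤ ·))[n]? = some a) : a ∈ s :=
  (Finset.mem_sort _).1 (List.mem_of_getElem? h)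

theorem stmt9_general (k : ℕ)
    (η : Ordinal → ℕ → Fin (k + 1))
    (u : Fin k → Finset Ordinal) (N : ℕ)
    (hN : ∀ i, (u i).card = N)
    (h : ℕ)
    (ha : ∀ i, ∀ β ∈ u i, ∀ β' ∈ u i, β ≠ β' → ∃ m < h, η β m ≠ η β' m)
    (hb : ∀ i j (n : ℕ) (β β' : Ordinal), n < N →
      ((u i).sort (· ≤ ·))[n]? = some β →
      ((u j).sort (· ≤ ·))[n]? = some β' →
      ∀ m ≤ h, η β m = η β' m)
    (r : Ordinal → ℕ) (c : ℕ → ℕ)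
    (hc : ∀ i (n : ℕ) (β : Ordinal), ((u i).sort (· ≤ ·))[n]? = some β → r β = c n)
    (hd : ∀ i, ¬ Bad k η r ↑(u i)) :
    ¬ Bad k η r (⋃ i, ↑(u i)) := by
  rintro ⟨ν, α, hα, hαu, hαr, hαν⟩
  have hpos (j) : ∃ i, ∃ n < N, ((u i).sort (· ≤ ·))[n]? = some (α j) := by
    obtain ⟨i, hi⟩ := Set.mem_iUnion.1 (hαu j)
    exact ⟨i, hN i ▸ Finset.exists_lt_card_getElem?_sort_eq hi⟩
  choose I n hnN hαn using hpos
  rcases le_or_gt h ν.length with hνh | hνh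
  · have hI := injective_of_separated ha hα (fun j => Finset.mem_of_getElem?_sort_eq (hαn j))
      fun j j' m hm => ((hαν j).append_left.apply_eq_apply (hαν j').append_left (by omega))
    simpa using Fintype.card_le_of_injective I hI
  · choose β hβn using fun j => Finset.exists_getElem?_sort_eq ((hN (I 0)).symm ▸ hnN j)
    refine hd (I 0) (bad_of_agree hαr hαν (fun j => Finset.mem_of_getElem?_sort_eq (hβn j))
      (fun j => ?_) fun j m hm => ?_)
    · rw [hc _ _ _ (hβn j), hc _ _ _ (hαn j)]
    · exact (hb _ _ _ _ _ (hnN j) (hαn j) (hβn j) m (by omega)).symm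

/-- Amalgamation for the Knaster poset: the union of k conditions of the same
type over a Δ-system is a condition. -/
theorem stmt9 (k : ℕ) (hk : 1 ≤ k)
    (η : Ordinal → ℕ → Fin (k + 1))
    (u : Fin k → Finset Ordinal) (t : Finset Ordinal) (N : ℕ)
    (hinj : ∀ α ∈ ⋃ i, (↑(u i) : Set Ordinal), ∀ β ∈ ⋃ i, (↑(u i) : Set Ordinal),
      η α = η β → α = β)
    (hΔ : ∀ i j, i ≠ j → u i ∩ u j = t)
    (hN : ∀ i, (u i).card = N)
    (h : ℕ)
    (ha : ∀ i, ∀ β ∈ u i, ∀ β' ∈ u i, β ≠ β' → ∃ m < h, η β m ≠ η β' m)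
    (hb : ∀ i j (n : ℕ) (β β' : Ordinal), n < N →
      ((u i).sort (· ≤ ·))[n]? = some β →
      ((u j).sort (· ≤ ·))[n]? = some β' →
      ∀ m ≤ h, η β m = η β' m)
    (r : Ordinal → ℕ) (c : ℕ → ℕ)
    (hc : ∀ i (n : ℕ) (β : Ordinal), ((u i).sort (· ≤ ·))[n]? = some β → r β = c n)
    (hd : ∀ i, ¬ Bad k η r ↑(u i)) :
    ¬ Bad k η r (⋃ i, ↑(u i)) :=
  stmt9_general k η u N hN h ha hb r c hc hd
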